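/- Let n ≥ 2, fix a unit vector a ∈ ℝ^{2n}, and let D = {(b, X) ∈ ℝ^{2n} × ℝ² : ⟨a, b⟩ = 0, ‖b‖² + ‖X‖² = 1}. Let j₊ : ℝ² → ℝ² be the rotation j₊(x₁,x₂) = (-x₂, x₁). Define F, G : D → (ℝ^{2n} × ℝ²) × (ℝ^{2n} × ℝ²) by F(b,X) = ((√(1-‖X‖²)·a, X), (b, -j₊X)) and G(b,X) = ((a, 0), (b, X)). Then F and G take values in Q̃_{n+1} = {(u,v) ∈ ℝ^{2n+2} × ℝ^{2n+2} : ‖u‖ = 1, ‖v‖ = 1, ⟨u,v⟩ = 0} (identifying ℝ^{2n+2} = ℝ^{2n} × ℝ²), and F and G are homotopic as continuous maps D → Q̃_{n+1}. -/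

import Mathlib

open scoped Topology RealInnerProductSpace

/-- The Stiefel manifold of orthonormal 2-frames in `ℝ^k`, with the subspace topology. -/
def Stiefel2 (k : ℕ) : Type :=
  {p : EuclideanSpace ℝ (Fin k) × EuclideanSpace ℝ (Fin k) //
    ‖p.1‖ = 1 ∧ ‖p.2‖ = 1 ∧ ⟪p.1, p.2⟫ = 0}

noncomputable instance (k : ℕ) : TopologicalSpace (Stiefel2 k) :=
  inferInstanceAs (TopologicalSpace
    {p : EuclideanSpace ℝ (Fin k) × EuclideanSpace ℝ (Fin k) //
      ‖p.1‖ = 1 ∧ ‖p.2‖ = 1 ∧ ⟪p.1, p.2⟫ = 0})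

/-- The identification `ℝ^m × ℝ² = ℝ^{m+2}`. -/
noncomputable def glue {m : ℕ} (b : EuclideanSpace ℝ (Fin m)) (X : EuclideanSpace ℝ (Fin 2)) :
    EuclideanSpace ℝ (Fin (m + 2)) := WithLp.toLp 2 fun i =>
  if h : (i : ℕ) < m then b ⟨i, h⟩ else X ⟨(i : ℕ) - m, by have := i.isLt; omega⟩

/-- The standard rotation `j₊(x₁, x₂) = (-x₂, x₁)` of `ℝ²`. -/
noncomputable def jplus (X : EuclideanSpace ℝ (Fin 2)) : EuclideanSpace ℝ (Fin 2) := WithLp.toLp 2 fun i =>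
  if (i : ℕ) = 0 then -(X 1) else X 0

/-!
Both maps send `(b, X)` to a pair `((√(1 - ‖w‖²)·a, w), (b, y))` with `w ⊥ y`, `‖w‖ ≤ 1` and
`‖y‖ = ‖X‖`, and every such pair is an orthonormal frame since `a` is a unit vector orthogonal
to `b`: for `F` we have `(w, y) = (X, -j₊X)`, for `G` we have `(w, y) = (0, X)`. Rotating
`y_θ = sin θ·X - cos θ·j₊X` from `-j₊X` to `X` and taking `w_θ = cos θ·j₊y_θ`, `θ ∈ [0, π/2]`,
joins the two through such pairs.
-/

section Glue

variable {m : ℕ}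

lemma inner_glue (b b' : EuclideanSpace ℝ (Fin m)) (X X' : EuclideanSpace ℝ (Fin 2)) :
    ⟪glue b X, glue b' X'⟫ = ⟪b, b'⟫ + ⟪X, X'⟫ := by
  simp only [PiLp.inner_apply, RCLike.inner_apply, conj_trivial, Fin.sum_univ_add]
  congr 1 <;> exact Finset.sum_congr rfl fun i _ => by simp [glue]

lemma norm_glue_sq (b : EuclideanSpace ℝ (Fin m)) (X : EuclideanSpace ℝ (Fin 2)) :
    ‖glue b X‖ ^ 2 = ‖b‖ ^ 2 + ‖X‖ ^ 2 := by
  simp only [← real_inner_self_eq_norm_sq, inner_glue]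

@[fun_prop]
lemma Continuous.glue {α : Type*} [TopologicalSpace α] {f : α → EuclideanSpace ℝ (Fin m)}
    {g : α → EuclideanSpace ℝ (Fin 2)} (hf : Continuous f) (hg : Continuous g) :
    Continuous fun x => glue (f x) (g x) := by
  refine (PiLp.continuous_toLp 2 _).comp (continuous_pi fun i => ?_)
  split_ifs
  · exact (EuclideanSpace.proj _).continuous.comp hf
  · exact (EuclideanSpace.proj _).continuous.comp hg

end Glue

section Jplus

lemma inner_fin_two (X Y : EuclideanSpace ℝ (Fin 2)) : ⟪X, Y⟫ = X 0 * Y 0 + X 1 * Y 1 := by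
  simp [PiLp.inner_apply, Fin.sum_univ_two, mul_comm]

lemma norm_fin_two_sq (X : EuclideanSpace ℝ (Fin 2)) : ‖X‖ ^ 2 = X 0 ^ 2 + X 1 ^ 2 := by
  simp [EuclideanSpace.real_norm_sq_eq, Fin.sum_univ_two]

@[simp] lemma jplus_apply_zero (X : EuclideanSpace ℝ (Fin 2)) : jplus X 0 = -X 1 := rfl
@[simp] lemma jplus_apply_one (X : EuclideanSpace ℝ (Fin 2)) : jplus X 1 = X 0 := rfl

lemma inner_jplus_self (X : EuclideanSpace ℝ (Fin 2)) : ⟪jplus X, X⟫ = 0 := by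
  rw [inner_fin_two, jplus_apply_zero, jplus_apply_one]
  ring

lemma norm_jplus (X : EuclideanSpace ℝ (Fin 2)) : ‖jplus X‖ = ‖X‖ := by
  rw [← sq_eq_sq₀ (norm_nonneg _) (norm_nonneg _), norm_fin_two_sq, norm_fin_two_sq,
    jplus_apply_zero, jplus_apply_one]
  ring

@[fun_prop]
lemma continuous_jplus : Continuous jplus := by
  refine (PiLp.continuous_toLp 2 _).comp (continuous_pi fun i => ?_)
  split_ifs
  · exact (EuclideanSpace.proj _).continuous.neg
  · exact (EuclideanSpace.proj _).continuous

end Jplus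

section Frame

variable {m : ℕ}

noncomputable def frame (a b : EuclideanSpace ℝ (Fin m)) (w y : EuclideanSpace ℝ (Fin 2)) :
    EuclideanSpace ℝ (Fin (m + 2)) × EuclideanSpace ℝ (Fin (m + 2)) :=
  (glue (√(1 - ‖w‖ ^ 2) • a) w, glue b y)

lemma frame_orthonormal {a b : EuclideanSpace ℝ (Fin m)} {w y : EuclideanSpace ℝ (Fin 2)}
    (ha : ‖a‖ = 1) (hab : ⟪a, b⟫ = 0) (hw : ‖w‖ ≤ 1) (hby : ‖b‖ ^ 2 + ‖y‖ ^ 2 = 1)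
    (hwy : ⟪w, y⟫ = 0) :
    ‖(frame a b w y).1‖ = 1 ∧ ‖(frame a b w y).2‖ = 1 ∧
      ⟪(frame a b w y).1, (frame a b w y).2⟫ = 0 := by
  have hw' : 0 ≤ 1 - ‖w‖ ^ 2 := by nlinarith [norm_nonneg w]
  simp only [← pow_eq_one_iff_of_nonneg (norm_nonneg _) two_ne_zero]
  refine ⟨?_, ?_, ?_⟩
  · rw [frame, norm_glue_sq, norm_smul, mul_pow, Real.norm_eq_abs, sq_abs, Real.sq_sqrt hw', ha]
    ring
  · rw [frame, norm_glue_sq, hby]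
  · rw [frame, inner_glue, real_inner_smul_left, hab, hwy, mul_zero, add_zero]

lemma frame_zero_left (a b : EuclideanSpace ℝ (Fin m)) (y : EuclideanSpace ℝ (Fin 2)) :
    frame a b 0 y = (glue a 0, glue b y) := by
  simp [frame]

end Frame

section Rotation

open Real

noncomputable def rotatedTail (θ : ℝ) (X : EuclideanSpace ℝ (Fin 2)) :
    EuclideanSpace ℝ (Fin 2) :=
  sin θ • X - cos θ • jplus X

noncomputable def shrunkTail (θ : ℝ) (X : EuclideanSpace ℝ (Fin 2)) :
    EuclideanSpace ℝ (Fin 2) :=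
  cos θ • jplus (rotatedTail θ X)

lemma norm_rotatedTail (θ : ℝ) (X : EuclideanSpace ℝ (Fin 2)) :
    ‖rotatedTail θ X‖ = ‖X‖ := by
  rw [← sq_eq_sq₀ (norm_nonneg _) (norm_nonneg _), norm_fin_two_sq, norm_fin_two_sq]
  simp only [rotatedTail, PiLp.sub_apply, PiLp.smul_apply, smul_eq_mul, jplus_apply_zero,
    jplus_apply_one]
  linear_combination (X 0 ^ 2 + X 1 ^ 2) * sin_sq_add_cos_sq θ

lemma norm_shrunkTail_le (θ : ℝ) (X : EuclideanSpace ℝ (Fin 2)) :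
    ‖shrunkTail θ X‖ ≤ ‖X‖ := by
  rw [shrunkTail, norm_smul, norm_jplus, norm_rotatedTail, norm_eq_abs]
  exact mul_le_of_le_one_left (norm_nonneg X) (abs_cos_le_one θ)

lemma inner_shrunkTail_rotatedTail (θ : ℝ) (X : EuclideanSpace ℝ (Fin 2)) :
    ⟪shrunkTail θ X, rotatedTail θ X⟫ = 0 := by
  rw [shrunkTail, real_inner_smul_left, inner_jplus_self, mul_zero]

lemma rotatedTail_zero (X : EuclideanSpace ℝ (Fin 2)) : rotatedTail 0 X = -jplus X := by
  simp [rotatedTail]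

lemma shrunkTail_zero (X : EuclideanSpace ℝ (Fin 2)) : shrunkTail 0 X = X := by
  ext i; fin_cases i <;> simp [shrunkTail, rotatedTail]

lemma rotatedTail_pi_div_two (X : EuclideanSpace ℝ (Fin 2)) : rotatedTail (π / 2) X = X := by
  simp [rotatedTail]

lemma shrunkTail_pi_div_two (X : EuclideanSpace ℝ (Fin 2)) : shrunkTail (π / 2) X = 0 := by
  simp [shrunkTail]

@[fun_prop]
lemma continuous_rotatedTail :
    Continuous fun p : ℝ × EuclideanSpace ℝ (Fin 2) => rotatedTail p.1 p.2 := by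
  unfold rotatedTail; fun_prop

end Rotation

section Homotopy

open Real

variable {m : ℕ} {a : EuclideanSpace ℝ (Fin m)}

abbrev DoubleSuspension (a : EuclideanSpace ℝ (Fin m)) : Type :=
  {bX : EuclideanSpace ℝ (Fin m) × EuclideanSpace ℝ (Fin 2) //
    ⟪a, bX.1⟫ = 0 ∧ ‖bX.1‖ ^ 2 + ‖bX.2‖ ^ 2 = 1}

lemma DoubleSuspension.norm_snd_le_one (z : DoubleSuspension a) : ‖z.1.2‖ ≤ 1 := by
  nlinarith [z.2.2, norm_nonneg z.1.1, norm_nonneg z.1.2]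

noncomputable def stabilizationHomotopy (ha : ‖a‖ = 1) :
    C(unitInterval × DoubleSuspension a, Stiefel2 (m + 2)) where
  toFun p :=
    ⟨frame a p.2.1.1 (shrunkTail (π / 2 * p.1) p.2.1.2) (rotatedTail (π / 2 * p.1) p.2.1.2),
      frame_orthonormal ha p.2.2.1 ((norm_shrunkTail_le _ _).trans p.2.norm_snd_le_one)
        (by rw [norm_rotatedTail]; exact p.2.2.2) (inner_shrunkTail_rotatedTail _ _)⟩
  continuous_toFun := by
    refine Continuous.subtype_mk ?_ _
    unfold frame shrunkTail
    fun_prop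

lemma stabilizationHomotopy_apply (ha : ‖a‖ = 1) (p : unitInterval × DoubleSuspension a) :
    (stabilizationHomotopy ha p).val =
      frame a p.2.1.1 (shrunkTail (π / 2 * p.1) p.2.1.2) (rotatedTail (π / 2 * p.1) p.2.1.2) :=
  rfl

end Homotopy

theorem stabilization_of_fibre_inclusion_general (n : ℕ)
    (a : EuclideanSpace ℝ (Fin (2 * n))) (ha : ‖a‖ = 1) :
    ∃ F G : C({bX : EuclideanSpace ℝ (Fin (2 * n)) × EuclideanSpace ℝ (Fin 2) //
                  ⟪a, bX.1⟫ = 0 ∧ ‖bX.1‖ ^ 2 + ‖bX.2‖ ^ 2 = 1},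
              Stiefel2 (2 * n + 2)),
      (∀ z, (F z).val =
        (glue (Real.sqrt (1 - ‖z.val.2‖ ^ 2) • a) z.val.2, glue z.val.1 (-(jplus z.val.2)))) ∧
      (∀ z, (G z).val = (glue a 0, glue z.val.1 z.val.2)) ∧
      F.Homotopic G := by
  let H := stabilizationHomotopy ha
  refine ⟨H.curry 0, H.curry 1, fun z => ?_, fun z => ?_,
    ⟨⟨H, fun _ => rfl, fun _ => rfl⟩⟩⟩
  · rw [ContinuousMap.curry_apply, stabilizationHomotopy_apply, Set.Icc.coe_zero, mul_zero,
      shrunkTail_zero, rotatedTail_zero, frame]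
  · rw [ContinuousMap.curry_apply, stabilizationHomotopy_apply, Set.Icc.coe_one, mul_one,
      shrunkTail_pi_div_two, rotatedTail_pi_div_two, frame_zero_left]

/-- On the double suspension
`D = {(b, X) : ⟨a,b⟩ = 0, ‖b‖² + ‖X‖² = 1} ⊆ ℝ^{2n} × ℝ²` of the fibre sphere `S(a^⊥)`,
the maps `F(b,X) = ((√(1-‖X‖²)·a, X), (b, -j₊X))` and `G(b,X) = ((a,0), (b,X))` take values in
the Stiefel manifold `Q̃_{n+1}` of 2-frames in `ℝ^{2n+2}` and are homotopic. -/
theorem stabilization_of_fibre_inclusion (n : ℕ) (hn : 2 ≤ n)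
    (a : EuclideanSpace ℝ (Fin (2 * n))) (ha : ‖a‖ = 1) :
    ∃ F G : C({bX : EuclideanSpace ℝ (Fin (2 * n)) × EuclideanSpace ℝ (Fin 2) //
                  ⟪a, bX.1⟫ = 0 ∧ ‖bX.1‖ ^ 2 + ‖bX.2‖ ^ 2 = 1},
              Stiefel2 (2 * n + 2)),
      (∀ z, (F z).val =
        (glue (Real.sqrt (1 - ‖z.val.2‖ ^ 2) • a) z.val.2, glue z.val.1 (-(jplus z.val.2)))) ∧
      (∀ z, (G z).val = (glue a 0, glue z.val.1 z.val.2)) ∧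
      F.Homotopic G :=
  stabilization_of_fibre_inclusion_general n a ha
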